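/- Let Spec = (Σ, Ax) be an axiomatic ed specification all of whose axioms are hybrid-free sentences. Then the model class Mod(Spec) is closed under bisimulation: if M ∈ Mod(Spec) and M′ is a Σ-edts bisimilar to M, then M′ ∈ Mod(Spec). -/
import Mathlib


/-!
Framework: event/data transition systems (edts) over an ed signature Σ = (E, A)
with a data universe `Data`, a type `SP` of state predicates and a type `TP` of
transition predicates (interpreted via `spSat`/`tpSat`).
-/

/-- Configurations: a control state paired with an `A`-data state. -/
abbrev Conf' (C A Data : Type) : Type := C × (A → Data)

/-- The raw data of a Σ-event/data transition system with control states `C`. -/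
structure PreEDTS (E A Data C : Type) : Type where
  conf : Set (Conf' C A Data)
  rel : E → Set (Conf' C A Data × Conf' C A Data)
  c0 : C
  init : Set (Conf' C A Data)

/-- `M` is a genuine Σ-edts: transitions stay inside the configurations, the
initial configurations form a non-empty subset of the configurations, all with
control state `c0`, and every configuration is reachable from an initial one. -/
def PreEDTS.IsEDTS {E A Data C : Type} (M : PreEDTS E A Data C) : Prop :=
  (∀ (e : E) p, p ∈ M.rel e → p.1 ∈ M.conf ∧ p.2 ∈ M.conf) ∧
  M.init ⊆ M.conf ∧
  (∀ γ ∈ M.init, γ.1 = M.c0) ∧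
  M.init.Nonempty ∧
  (∀ γ ∈ M.conf, ∃ γ0 ∈ M.init,
    Relation.ReflTransGen (fun γ γ' => ∃ e : E, (γ, γ') ∈ M.rel e) γ0 γ)

/-- Σ-ed actions: atomic actions `e⧸ψ`, union, sequential composition, iteration. -/
inductive Act (E TP : Type) : Type where
  | atom : E → TP → Act E TP
  | choice : Act E TP → Act E TP → Act E TP
  | seq : Act E TP → Act E TP → Act E TP
  | star : Act E TP → Act E TP

/-- Interpretation of Σ-ed actions over an edts `M`. -/
def actRel {E A Data C TP : Type} (tpSat : TP → (A → Data) → (A → Data) → Prop)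
    (M : PreEDTS E A Data C) :
    Act E TP → Conf' C A Data → Conf' C A Data → Prop
  | Act.atom e ψ => fun γ γ' => (γ, γ') ∈ M.rel e ∧ tpSat ψ γ.2 γ'.2
  | Act.choice l₁ l₂ => fun γ γ' => actRel tpSat M l₁ γ γ' ∨ actRel tpSat M l₂ γ γ'
  | Act.seq l₁ l₂ => fun γ γ' => ∃ γm, actRel tpSat M l₁ γ γm ∧ actRel tpSat M l₂ γm γ'
  | Act.star l => Relation.ReflTransGen (actRel tpSat M l)

/-- Hybrid-free Σ-ed formulae: `ρ ::= φ | ⟨λ⟩ρ | true | ¬ρ | ρ₁ ∨ ρ₂`. -/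
inductive HFrm (E TP SP : Type) : Type where
  | st : SP → HFrm E TP SP
  | dia : Act E TP → HFrm E TP SP → HFrm E TP SP
  | tt : HFrm E TP SP
  | neg : HFrm E TP SP → HFrm E TP SP
  | or : HFrm E TP SP → HFrm E TP SP → HFrm E TP SP

/-- Satisfaction of hybrid-free sentences at a configuration. -/
def hsat {E A Data C SP TP : Type} (spSat : SP → (A → Data) → Prop)
    (tpSat : TP → (A → Data) → (A → Data) → Prop)
    (M : PreEDTS E A Data C) : Conf' C A Data → HFrm E TP SP → Prop
  | γ, HFrm.st φ => spSat φ γ.2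
  | γ, HFrm.dia l ρ => ∃ γ', actRel tpSat M l γ γ' ∧ hsat spSat tpSat M γ' ρ
  | _, HFrm.tt => True
  | γ, HFrm.neg ρ => ¬ hsat spSat tpSat M γ ρ
  | γ, HFrm.or ρ₁ ρ₂ => hsat spSat tpSat M γ ρ₁ ∨ hsat spSat tpSat M γ ρ₂

/-- Bisimulation relations `B ⊆ Conf(M1) × Conf(M2)`: conditions (atom), (zig), (zag). -/
structure IsBisim {E A Data C₁ C₂ SP TP : Type}
    (spSat : SP → (A → Data) → Prop)
    (tpSat : TP → (A → Data) → (A → Data) → Prop)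
    (M₁ : PreEDTS E A Data C₁) (M₂ : PreEDTS E A Data C₂)
    (B : Conf' C₁ A Data → Conf' C₂ A Data → Prop) : Prop where
  dom : ∀ γ₁ γ₂, B γ₁ γ₂ → γ₁ ∈ M₁.conf ∧ γ₂ ∈ M₂.conf
  atom : ∀ γ₁ γ₂, B γ₁ γ₂ → ∀ φ : SP, spSat φ γ₁.2 ↔ spSat φ γ₂.2
  zig : ∀ γ₁ γ₂, B γ₁ γ₂ → ∀ (e : E) (ψ : TP) γ₁',
    (γ₁, γ₁') ∈ M₁.rel e → tpSat ψ γ₁.2 γ₁'.2 →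
    ∃ γ₂', ((γ₂, γ₂') ∈ M₂.rel e ∧ tpSat ψ γ₂.2 γ₂'.2) ∧ B γ₁' γ₂'
  zag : ∀ γ₁ γ₂, B γ₁ γ₂ → ∀ (e : E) (ψ : TP) γ₂',
    (γ₂, γ₂') ∈ M₂.rel e → tpSat ψ γ₂.2 γ₂'.2 →
    ∃ γ₁', ((γ₁, γ₁') ∈ M₁.rel e ∧ tpSat ψ γ₁.2 γ₁'.2) ∧ B γ₁' γ₂'

/-- `M₁` and `M₂` are bisimilar: there is a bisimulation relation additionally
satisfying the (init) condition. -/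
def Bisimilar {E A Data C₁ C₂ SP TP : Type}
    (spSat : SP → (A → Data) → Prop)
    (tpSat : TP → (A → Data) → (A → Data) → Prop)
    (M₁ : PreEDTS E A Data C₁) (M₂ : PreEDTS E A Data C₂) : Prop :=
  ∃ B, IsBisim spSat tpSat M₁ M₂ B ∧
    (∀ γ₁ ∈ M₁.init, ∃ γ₂ ∈ M₂.init, B γ₁ γ₂) ∧
    (∀ γ₂ ∈ M₂.init, ∃ γ₁ ∈ M₁.init, B γ₁ γ₂)

/-- `M ⊨ ρ`: the sentence `ρ` holds at all initial configurations of `M`. -/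
def MsatHF {E A Data C SP TP : Type} (spSat : SP → (A → Data) → Prop)
    (tpSat : TP → (A → Data) → (A → Data) → Prop)
    (M : PreEDTS E A Data C) (ρ : HFrm E TP SP) : Prop :=
  ∀ γ0 ∈ M.init, hsat spSat tpSat M γ0 ρ

section Aux
variable {E A Data C₁ C₂ SP TP : Type}
  (spSat : SP → (A → Data) → Prop)
  (tpSat : TP → (A → Data) → (A → Data) → Prop)
  (M₁ : PreEDTS E A Data C₁) (M₂ : PreEDTS E A Data C₂)
  {B : Conf' C₁ A Data → Conf' C₂ A Data → Prop}
  (hB : IsBisim spSat tpSat M₁ M₂ B)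
include hB

lemma act_zig : ∀ (l : Act E TP) γ₁ γ₂ γ₁', B γ₁ γ₂ →
    actRel tpSat M₁ l γ₁ γ₁' → ∃ γ₂', actRel tpSat M₂ l γ₂ γ₂' ∧ B γ₁' γ₂' := by
  intro l
  induction l with
  | atom e ψ =>
    intro γ₁ γ₂ γ₁' hb ⟨hr, ht⟩
    obtain ⟨γ₂', ⟨h1, h2⟩, h3⟩ := hB.zig γ₁ γ₂ hb e ψ γ₁' hr ht
    exact ⟨γ₂', ⟨h1, h2⟩, h3⟩
  | choice l₁ l₂ ih₁ ih₂ =>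
    rintro γ₁ γ₂ γ₁' hb (h | h)
    · obtain ⟨γ₂', h1, h2⟩ := ih₁ γ₁ γ₂ γ₁' hb h
      exact ⟨γ₂', Or.inl h1, h2⟩
    · obtain ⟨γ₂', h1, h2⟩ := ih₂ γ₁ γ₂ γ₁' hb h
      exact ⟨γ₂', Or.inr h1, h2⟩
  | seq l₁ l₂ ih₁ ih₂ =>
    rintro γ₁ γ₂ γ₁' hb ⟨γm, h1, h2⟩
    obtain ⟨γ₂m, hm1, hm2⟩ := ih₁ γ₁ γ₂ γm hb h1
    obtain ⟨γ₂', hf1, hf2⟩ := ih₂ γm γ₂m γ₁' hm2 h2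
    exact ⟨γ₂', ⟨γ₂m, hm1, hf1⟩, hf2⟩
  | star l ih =>
    intro γ₁ γ₂ γ₁' hb h
    induction h with
    | refl => exact ⟨γ₂, Relation.ReflTransGen.refl, hb⟩
    | tail _ hstep ih' =>
      obtain ⟨γ₂m, hm1, hm2⟩ := ih'
      obtain ⟨γ₂', h1, h2⟩ := ih _ γ₂m _ hm2 hstep
      exact ⟨γ₂', hm1.tail h1, h2⟩

lemma act_zag : ∀ (l : Act E TP) γ₁ γ₂ γ₂', B γ₁ γ₂ →
    actRel tpSat M₂ l γ₂ γ₂' → ∃ γ₁', actRel tpSat M₁ l γ₁ γ₁' ∧ B γ₁' γ₂' := by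
  intro l
  induction l with
  | atom e ψ =>
    intro γ₁ γ₂ γ₂' hb ⟨hr, ht⟩
    obtain ⟨γ₁', ⟨h1, h2⟩, h3⟩ := hB.zag γ₁ γ₂ hb e ψ γ₂' hr ht
    exact ⟨γ₁', ⟨h1, h2⟩, h3⟩
  | choice l₁ l₂ ih₁ ih₂ =>
    rintro γ₁ γ₂ γ₂' hb (h | h)
    · obtain ⟨γ₁', h1, h2⟩ := ih₁ γ₁ γ₂ γ₂' hb h
      exact ⟨γ₁', Or.inl h1, h2⟩
    · obtain ⟨γ₁', h1, h2⟩ := ih₂ γ₁ γ₂ γ₂' hb h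
      exact ⟨γ₁', Or.inr h1, h2⟩
  | seq l₁ l₂ ih₁ ih₂ =>
    rintro γ₁ γ₂ γ₂' hb ⟨γm, h1, h2⟩
    obtain ⟨γ₁m, hm1, hm2⟩ := ih₁ γ₁ γ₂ γm hb h1
    obtain ⟨γ₁', hf1, hf2⟩ := ih₂ γ₁m γm γ₂' hm2 h2
    exact ⟨γ₁', ⟨γ₁m, hm1, hf1⟩, hf2⟩
  | star l ih =>
    intro γ₁ γ₂ γ₂' hb h
    induction h with
    | refl => exact ⟨γ₁, Relation.ReflTransGen.refl, hb⟩
    | tail _ hstep ih' =>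
      obtain ⟨γ₁m, hm1, hm2⟩ := ih'
      obtain ⟨γ₁', h1, h2⟩ := ih γ₁m _ _ hm2 hstep
      exact ⟨γ₁', hm1.tail h1, h2⟩

lemma hsat_invariant : ∀ (ρ : HFrm E TP SP) γ₁ γ₂, B γ₁ γ₂ →
    (hsat spSat tpSat M₁ γ₁ ρ ↔ hsat spSat tpSat M₂ γ₂ ρ) := by
  intro ρ
  induction ρ with
  | st φ => intro γ₁ γ₂ hb; exact hB.atom γ₁ γ₂ hb φ
  | dia l ρ ih =>
    intro γ₁ γ₂ hb
    constructor
    · rintro ⟨γ₁', h1, h2⟩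
      obtain ⟨γ₂', ha, hb'⟩ := act_zig spSat tpSat M₁ M₂ hB l γ₁ γ₂ γ₁' hb h1
      exact ⟨γ₂', ha, (ih γ₁' γ₂' hb').mp h2⟩
    · rintro ⟨γ₂', h1, h2⟩
      obtain ⟨γ₁', ha, hb'⟩ := act_zag spSat tpSat M₁ M₂ hB l γ₁ γ₂ γ₂' hb h1
      exact ⟨γ₁', ha, (ih γ₁' γ₂' hb').mpr h2⟩
  | tt => intro _ _ _; simp [hsat]
  | neg ρ ih => intro γ₁ γ₂ hb; exact not_congr (ih γ₁ γ₂ hb)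
  | or ρ₁ ρ₂ ih₁ ih₂ => intro γ₁ γ₂ hb; exact or_congr (ih₁ γ₁ γ₂ hb) (ih₂ γ₁ γ₂ hb)

end Aux

/-- The model class of an axiomatic ed specification all of whose
axioms are hybrid-free sentences is closed under bisimulation: if `M` satisfies all
axioms and `M'` is a Σ-edts bisimilar to `M`, then `M'` satisfies all axioms. -/
theorem model_class_closed_under_bisimulation
    {E A Data C SP TP : Type} [Finite E]
    (spSat : SP → (A → Data) → Prop)
    (tpSat : TP → (A → Data) → (A → Data) → Prop)
    (Ax : Set (HFrm E TP SP))
    (M : PreEDTS E A Data C) (hM : M.IsEDTS)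
    (hMod : ∀ ρ ∈ Ax, MsatHF spSat tpSat M ρ)
    {C' : Type} (M' : PreEDTS E A Data C') (hM' : M'.IsEDTS)
    (hbis : Bisimilar spSat tpSat M M') :
    ∀ ρ ∈ Ax, MsatHF spSat tpSat M' ρ := by
  intro ρ hρ γ0' hγ0'
  obtain ⟨B, hB, _, hinit⟩ := hbis
  obtain ⟨γ0, hγ0, hb⟩ := hinit γ0' hγ0'
  exact (hsat_invariant spSat tpSat M M' hB ρ γ0 γ0' hb).mp (hMod ρ hρ γ0 hγ0)
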